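/- The language accepted by a finite deterministic automaton is a regular language, i.e., it is denoted by some regular expression. The proof proceeds by setting up, for each state s_i, the language X_i of words leading from s_i to an accepting state, showing these satisfy a system of right-linear equations with ε-free coefficients, and invoking uniqueness of solutions. -/

import Mathlib

/-!
The languages `X p` of words leading from state `p` to an accepting state satisfy the right-linear
system `X p = ∑ q, A p q * X q + E p`, where `A p q` is the finite set of one-letter words labelling
the transitions from `p` to `q` and `E p = {ε}` or `∅` according as `p` is accepting. Since no
coefficient contains the empty word, Arden's lemma solves the equation of one unknown as
`X k = (A k k)∗ * (∑ j ≠ k, A k j * X j + E k)`; substituting this into the other equations gives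
a system of the same shape in one unknown fewer, with coefficients still regular and `ε`-free.
Induction on the number of unknowns shows that every `X p`, in particular `X start`, is regular.
-/

open Computability

namespace Language

variable {α : Type*}

theorem mem_singleton {x y : List α} : x ∈ ({y} : Language α) ↔ x = y := Iff.rfl

theorem mem_sum {ι : Type*} {s : Finset ι} {l : ι → Language α} {x : List α} :
    x ∈ ∑ i ∈ s, l i ↔ ∃ i ∈ s, x ∈ l i := by
  classical
  induction s using Finset.induction_on with
  | empty => simp [notMem_zero]
  | insert i s hi ih => rw [Finset.sum_insert hi, mem_add, ih, Finset.exists_mem_insert]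

theorem nil_mem_mul_iff {l m : Language α} : [] ∈ l * m ↔ [] ∈ l ∧ [] ∈ m := by
  simp [mem_mul]

variable (α) in
def regexLanguages : Subsemiring (Language α) where
  carrier := Set.range RegularExpression.matches'
  zero_mem' := ⟨0, RegularExpression.matches'_zero⟩
  one_mem' := ⟨1, RegularExpression.matches'_epsilon⟩
  add_mem' := by
    rintro _ _ ⟨r, rfl⟩ ⟨s, rfl⟩
    exact ⟨r + s, RegularExpression.matches'_add r s⟩
  mul_mem' := by
    rintro _ _ ⟨r, rfl⟩ ⟨s, rfl⟩
    exact ⟨r * s, RegularExpression.matches'_mul r s⟩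

theorem mem_regexLanguages {l : Language α} :
    l ∈ regexLanguages α ↔ ∃ r : RegularExpression α, r.matches' = l := Iff.rfl

theorem singleton_mem_regexLanguages (a : α) : {[a]} ∈ regexLanguages α :=
  ⟨RegularExpression.char a, RegularExpression.matches'_char a⟩

theorem kstar_mem_regexLanguages {l : Language α} (hl : l ∈ regexLanguages α) :
    l∗ ∈ regexLanguages α := by
  obtain ⟨r, rfl⟩ := hl
  exact ⟨r.star, RegularExpression.matches'_star r⟩

section LinearSystem

variable {ι : Type*} [DecidableEq ι] {A : ι → ι → Language α} {E X : ι → Language α}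
  {s : Finset ι} {k : ι}

theorem eq_kstar_mul_of_linear_system (hk : k ∉ s) (hAkk : [] ∉ A k k)
    (hXk : X k = ∑ j ∈ insert k s, A k j * X j + E k) :
    X k = (A k k)∗ * (∑ j ∈ s, A k j * X j + E k) := by
  rw [← self_eq_mul_add_iff hAkk]
  conv_lhs => rw [hXk, Finset.sum_insert hk]
  rw [add_assoc]

theorem linear_system_eliminate (hk : k ∉ s) (hAkk : [] ∉ A k k)
    (hX : ∀ i ∈ insert k s, X i = ∑ j ∈ insert k s, A i j * X j + E i) {i : ι} (hi : i ∈ s) :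
    X i = ∑ j ∈ s, (A i j + A i k * (A k k)∗ * A k j) * X j +
      (E i + A i k * (A k k)∗ * E k) := by
  rw [hX i (Finset.mem_insert_of_mem hi), Finset.sum_insert hk,
    eq_kstar_mul_of_linear_system hk hAkk (hX k (Finset.mem_insert_self k s))]
  simp only [add_mul, Finset.sum_add_distrib, mul_add, Finset.mul_sum, mul_assoc]
  abel

theorem linear_system_solution_mem_regexLanguages (s : Finset ι)
    (hA : ∀ i ∈ s, ∀ j ∈ s, A i j ∈ regexLanguages α) (hA_nil : ∀ i ∈ s, ∀ j ∈ s, [] ∉ A i j)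
    (hE : ∀ i ∈ s, E i ∈ regexLanguages α)
    (hX : ∀ i ∈ s, X i = ∑ j ∈ s, A i j * X j + E i) :
    ∀ i ∈ s, X i ∈ regexLanguages α := by
  induction s using Finset.induction_on generalizing A E with
  | empty => simp
  | insert k s hk ih =>
    have hk_mem := Finset.mem_insert_self k s
    have hs_mem : ∀ {i}, i ∈ s → i ∈ insert k s := Finset.mem_insert_of_mem
    have hAkk_nil := hA_nil k hk_mem k hk_mem
    have hAk : ∀ i ∈ s, A i k * (A k k)∗ ∈ regexLanguages α := fun i hi =>
      mul_mem (hA i (hs_mem hi) k hk_mem) (kstar_mem_regexLanguages (hA k hk_mem k hk_mem))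
    have hXs : ∀ i ∈ s, X i ∈ regexLanguages α := by
      refine ih (fun i hi j hj => ?_) (fun i hi j hj => ?_) (fun i hi => ?_)
        (fun i hi => linear_system_eliminate hk hAkk_nil hX hi)
      · exact add_mem (hA i (hs_mem hi) j (hs_mem hj))
          (mul_mem (hAk i hi) (hA k hk_mem j (hs_mem hj)))
      · rw [mem_add, nil_mem_mul_iff, nil_mem_mul_iff]
        exact fun h => h.elim (hA_nil i (hs_mem hi) j (hs_mem hj))
          fun h => hA_nil i (hs_mem hi) k hk_mem h.1.1
      · exact add_mem (hE i (hs_mem hi)) (mul_mem (hAk i hi) (hE k hk_mem))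
    intro i hi
    rcases Finset.mem_insert.mp hi with rfl | hi
    · rw [eq_kstar_mul_of_linear_system hk hAkk_nil (hX i hi)]
      refine mul_mem (kstar_mem_regexLanguages (hA i hi i hi)) (add_mem ?_ (hE i hi))
      exact Subsemiring.sum_mem _ fun j hj =>
        mul_mem (hA i hi j (hs_mem hj)) (hXs j hj)
    · exact hXs i hi

end LinearSystem

end Language

namespace DFA

variable {α σ : Type*} [Fintype α] [DecidableEq σ] (M : DFA α σ)

def transitionLang (p q : σ) : Language α :=
  ∑ a with M.step p a = q, {[a]}

theorem transitionLang_mem_regexLanguages (p q : σ) :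
    M.transitionLang p q ∈ Language.regexLanguages α :=
  Subsemiring.sum_mem _ fun a _ => Language.singleton_mem_regexLanguages a

theorem nil_notMem_transitionLang (p q : σ) : [] ∉ M.transitionLang p q := by
  simp [transitionLang, Language.mem_sum, Language.mem_singleton]

variable [Fintype σ]

open Classical in
theorem acceptsFrom_eq_sum (p : σ) :
    M.acceptsFrom p = ∑ q, M.transitionLang p q * M.acceptsFrom q +
      if p ∈ M.accept then 1 else 0 := by
  ext w
  rw [Language.mem_add, Language.mem_sum]
  simp only [transitionLang, Finset.sum_mul, Language.mem_sum, Language.mem_mul]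
  cases w with
  | nil =>
    split_ifs <;> simp [mem_acceptsFrom, Language.mem_one, Language.notMem_zero,
      Language.mem_singleton, *]
  | cons a w =>
    split_ifs <;> simp [mem_acceptsFrom, Language.mem_one, Language.notMem_zero,
      Language.mem_singleton]

theorem acceptsFrom_mem_regexLanguages (p : σ) :
    M.acceptsFrom p ∈ Language.regexLanguages α := by
  classical
  refine Language.linear_system_solution_mem_regexLanguages Finset.univ
    (fun p _ q _ => M.transitionLang_mem_regexLanguages p q)
    (fun p _ q _ => M.nil_notMem_transitionLang p q) (fun p _ => ?_)
    (fun p _ => M.acceptsFrom_eq_sum p) p (Finset.mem_univ p)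
  split_ifs
  exacts [one_mem _, zero_mem _]

end DFA

theorem dfa_language_regular {σ α : Type} [Fintype σ] [Fintype α] (M : DFA α σ) :
    ∃ r : RegularExpression α, r.matches' = M.accepts := by
  classical
  exact Language.mem_regexLanguages.mp (M.acceptsFrom_mem_regexLanguages M.start)
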